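/- arXiv:1912.09122 — 4 statements merged into one kernel-verified Lean document; each statement's English description precedes it below -/
import Mathlib

section
/- Let V be a minuscule representation of a simple complex Lie algebra g, and let i, j be indices of simple roots with Cartan integer a_{ij} = ⟨α_j, α_i∨⟩ = −1. Then for every v ∈ V, e_i e_j e_i · v = 0 and f_i f_j f_i · v = 0. -/
open LieAlgebra LieModule

/-- The Weyl group of the pair `(g, H)`: the group of linear automorphisms of
`H*` generated by the reflections in the roots of `(g, H)`. -/
noncomputable def weylGroup (g : Type*) [LieRing g] [LieAlgebra ℂ g]
    [LieAlgebra.IsKilling ℂ g] [FiniteDimensional ℂ g]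
    (H : LieSubalgebra ℂ g) [H.IsCartanSubalgebra] :
    Subgroup ((Module.Dual ℂ H) ≃ₗ[ℂ] (Module.Dual ℂ H)) :=
  Subgroup.closure {w | ∃ (α : Weight ℂ H g) (hα : α.IsNonZero),
    w = Module.reflection
      (f := Module.Dual.eval ℂ ↥H (IsKilling.coroot α))
      (x := Weight.toLinear ℂ H g α)
      (by simpa using IsKilling.root_apply_coroot hα)}

/-! The Weyl group preserves the canonical form `Q` of the root system, so all weights of a
minuscule module have the same length. If `eα eβ eα v ≠ 0` for a weight vector `v` of weight `λ`,
then `λ`, `λ + α`, `λ + α + β` and `λ + 2α + β` are all weights, and comparing their lengths with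
`2 Q(α, β) = -Q(α, α)` (which is `⟨β, α∨⟩ = -1`) forces `Q(α, α) = 0`, impossible for a root.
The `f`-case is the same argument for `-α, -β`, and weight vectors span `V`. -/

lemma LinearMap.IsSymm.apply_self_eq_zero_of_apply_self_add_eq {R M : Type*} [CommRing R]
    [AddCommGroup M] [Module R M] {Q : LinearMap.BilinForm R M} (hQ : LinearMap.IsSymm Q)
    {x a b : M} (h₁ : Q (a + x) (a + x) = Q x x) (h₂ : Q (b + (a + x)) (b + (a + x)) = Q x x)
    (h₃ : Q (a + (b + (a + x))) (a + (b + (a + x))) = Q x x) (hab : 2 * Q a b = -Q a a) :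
    Q a a = 0 := by
  have hxa := hQ.eq a x
  have hab' := hQ.eq b a
  simp only [map_add, LinearMap.add_apply, RingHom.id_apply] at h₁ h₂ h₃ hxa hab'
  linear_combination h₃ - h₂ - h₁ - hab' - hab

lemma RootPairing.rootForm_root_self_mul_toLinearMap {ι R M N : Type*} [Fintype ι] [CommRing R]
    [AddCommGroup M] [Module R M] [AddCommGroup N] [Module R N] (P : RootPairing ι R M N)
    (i : ι) (x : M) :
    P.RootForm (P.root i) (P.root i) * P.toLinearMap x (P.coroot i) =
      2 * P.RootForm (P.root i) x := by
  have h := congrArg (P.toLinearMap x) (P.rootForm_self_smul_coroot i)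
  rwa [map_smul, map_nsmul, toLinearMap_apply_apply_Polarization, smul_eq_mul,
    nsmul_eq_mul, Nat.cast_ofNat] at h

lemma rootForm_apply_apply_of_mem_weylGroup {g : Type*} [LieRing g] [LieAlgebra ℂ g]
    [LieAlgebra.IsKilling ℂ g] [FiniteDimensional ℂ g]
    {H : LieSubalgebra ℂ g} [H.IsCartanSubalgebra]
    {w : Module.Dual ℂ H ≃ₗ[ℂ] Module.Dual ℂ H} (hw : w ∈ weylGroup g H)
    (x y : Module.Dual ℂ H) :
    (IsKilling.rootSystem H).RootForm (w x) (w y) = (IsKilling.rootSystem H).RootForm x y := by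
  induction hw using Subgroup.closure_induction generalizing x y with
  | mem w hw =>
    obtain ⟨γ, hγ, rfl⟩ := hw
    have hγ' : γ ∈ H.root := by simpa [LieSubalgebra.root] using hγ
    convert (IsKilling.rootSystem H).rootForm_reflection_reflection_apply ⟨γ, hγ'⟩ x y
      using 2 <;> ext <;> simp [Module.reflection_apply, RootPairing.reflection_apply]
  | one => rfl
  | mul w₁ w₂ _ _ h₁ h₂ => exact (h₁ _ _).trans (h₂ x y)
  | inv w _ h => simpa using (h (w⁻¹ x) (w⁻¹ y)).symm

lemma LieSubmodule.ne_bot_of_mem {R L M : Type*} [CommRing R] [LieRing L] [AddCommGroup M]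
    [Module R M] [LieRingModule L M] {N : LieSubmodule R L M} {u : M} (hu : u ∈ N)
    (hu₀ : u ≠ 0) : N ≠ ⊥ :=
  fun h ↦ hu₀ ((LieSubmodule.mem_bot u).mp (h ▸ hu))

namespace LieModule

variable {K L M : Type*} [Field K] [LieRing L] [LieAlgebra K L] [LieRing.IsNilpotent L]
  [AddCommGroup M] [Module K M] [LieRingModule L M] [LieModule K L M]

variable (M) in
def WeightsHaveEqualLength (Q : LinearMap.BilinForm K (Module.Dual K L)) : Prop :=
  ∀ χ₁ χ₂ : Module.Dual K L, genWeightSpace M ⇑χ₁ ≠ ⊥ → genWeightSpace M ⇑χ₂ ≠ ⊥ →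
    Q χ₁ χ₁ = Q χ₂ χ₂

lemma linearMap_eq_zero_of_forall_mem_genWeightSpace [FiniteDimensional K M]
    [IsTriangularizable K L M] {N : Type*} [AddCommGroup N] [Module K N]
    (f : M →ₗ[K] N) (hf : ∀ (χ : Weight K L M), ∀ v ∈ genWeightSpace M χ, f v = 0) : f = 0 := by
  have h : ⨆ χ : Weight K L M, (genWeightSpace M χ).toSubmodule ≤ LinearMap.ker f :=
    iSup_le fun χ ↦ hf χ
  rwa [← LieSubmodule.iSup_toSubmodule, iSup_genWeightSpace_eq_top',
    LieSubmodule.top_toSubmodule, top_le_iff, LinearMap.ker_eq_top] at h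

end LieModule

namespace LieModule.WeightsHaveEqualLength

variable {K L M : Type*} [Field K] [LieRing L] [LieAlgebra K L] {H : LieSubalgebra K L}
  [LieRing.IsNilpotent H] [AddCommGroup M] [Module K M] [LieRingModule L M] [LieModule K L M]
  {Q : LinearMap.BilinForm K (Module.Dual K H)}

lemma lie_lie_lie_eq_zero_of_mem_genWeightSpace (hM : WeightsHaveEqualLength M Q)
    (hQ : LinearMap.IsSymm Q) {a b : Module.Dual K H} (ha : Q a a ≠ 0) (hab : 2 * Q a b = -Q a a)
    {x y : L} (hx : x ∈ rootSpace H ⇑a) (hy : y ∈ rootSpace H ⇑b)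
    {χ : Module.Dual K H} {v : M} (hv : v ∈ genWeightSpace M ⇑χ) :
    ⁅x, ⁅y, ⁅x, v⁆⁆⁆ = 0 := by
  by_contra h₃
  have h₂ : ⁅y, ⁅x, v⁆⁆ ≠ 0 := fun h ↦ h₃ (by rw [h, lie_zero])
  have h₁ : ⁅x, v⁆ ≠ 0 := fun h ↦ h₂ (by rw [h, lie_zero])
  have h₀ : v ≠ 0 := fun h ↦ h₁ (by rw [h, lie_zero])
  have hv₁ : ⁅x, v⁆ ∈ genWeightSpace M ⇑(a + χ) :=
    lie_mem_genWeightSpace_of_mem_genWeightSpace hx hv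
  have hv₂ : ⁅y, ⁅x, v⁆⁆ ∈ genWeightSpace M ⇑(b + (a + χ)) :=
    lie_mem_genWeightSpace_of_mem_genWeightSpace hy hv₁
  have hv₃ : ⁅x, ⁅y, ⁅x, v⁆⁆⁆ ∈ genWeightSpace M ⇑(a + (b + (a + χ))) :=
    lie_mem_genWeightSpace_of_mem_genWeightSpace hx hv₂
  have hlength : ∀ {μ : Module.Dual K H} {u : M}, u ∈ genWeightSpace M ⇑μ → u ≠ 0 →
      Q μ μ = Q χ χ := fun hu hu₀ ↦
    (hM χ _ (LieSubmodule.ne_bot_of_mem hv h₀) (LieSubmodule.ne_bot_of_mem hu hu₀)).symm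
  exact ha (hQ.apply_self_eq_zero_of_apply_self_add_eq (hlength hv₁ h₁) (hlength hv₂ h₂)
    (hlength hv₃ h₃) hab)

lemma lie_lie_lie_eq_zero [FiniteDimensional K M] [LinearWeights K H M]
    [IsTriangularizable K H M] (hM : WeightsHaveEqualLength M Q) (hQ : LinearMap.IsSymm Q)
    {a b : Module.Dual K H} (ha : Q a a ≠ 0) (hab : 2 * Q a b = -Q a a)
    {x y : L} (hx : x ∈ rootSpace H ⇑a) (hy : y ∈ rootSpace H ⇑b) (v : M) :
    ⁅x, ⁅y, ⁅x, v⁆⁆⁆ = 0 := by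
  have hf : toEnd K L M x ∘ₗ toEnd K L M y ∘ₗ toEnd K L M x = 0 :=
    linearMap_eq_zero_of_forall_mem_genWeightSpace (L := H) _ fun χ _ hu ↦
      hM.lie_lie_lie_eq_zero_of_mem_genWeightSpace hQ ha hab hx hy
        (χ := Weight.toLinear K H M χ) hu
  exact LinearMap.congr_fun hf v

end LieModule.WeightsHaveEqualLength

theorem serre_type_vanishing_on_minuscule_general
    (g : Type*) [LieRing g] [LieAlgebra ℂ g]
    [LieAlgebra.IsKilling ℂ g] [FiniteDimensional ℂ g]
    (H : LieSubalgebra ℂ g) [H.IsCartanSubalgebra]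
    (V : Type*) [AddCommGroup V] [Module ℂ V] [LieRingModule g V] [LieModule ℂ g V]
    [FiniteDimensional ℂ V]
    (hminuscule : ∀ χ₁ χ₂ : Module.Dual ℂ H,
      genWeightSpace V ⇑χ₁ ≠ ⊥ → genWeightSpace V ⇑χ₂ ≠ ⊥ →
      ∃ w ∈ weylGroup g H, w χ₁ = χ₂)
    (α β : Weight ℂ H g) (hα : α.IsNonZero)
    (hcartan : β (IsKilling.coroot α) = -1)
    (eα fα eβ fβ : g)
    (heα : eα ∈ rootSpace H ⇑α) (hfα : fα ∈ rootSpace H (-⇑α))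
    (heβ : eβ ∈ rootSpace H ⇑β) (hfβ : fβ ∈ rootSpace H (-⇑β)) :
    ∀ v : V, ⁅eα, ⁅eβ, ⁅eα, v⁆⁆⁆ = 0 ∧ ⁅fα, ⁅fβ, ⁅fα, v⁆⁆⁆ = 0 := by
  set P := IsKilling.rootSystem H
  have hV : WeightsHaveEqualLength V P.RootForm := fun χ₁ χ₂ h₁ h₂ ↦ by
    obtain ⟨w, hw, rfl⟩ := hminuscule χ₁ χ₂ h₁ h₂
    exact (rootForm_apply_apply_of_mem_weylGroup hw χ₁ χ₁).symm
  let i : H.root := ⟨α, by simpa [LieSubalgebra.root] using hα⟩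
  have ha : P.RootForm (P.root i) (P.root i) ≠ 0 :=
    RootPairing.IsAnisotropic.rootForm_root_ne_zero i
  have hab : 2 * P.RootForm (P.root i) β = -P.RootForm (P.root i) (P.root i) := by
    rw [← P.rootForm_root_self_mul_toLinearMap i]
    change _ * β (IsKilling.coroot α) = _
    rw [hcartan, mul_neg_one]
  intro v
  refine ⟨hV.lie_lie_lie_eq_zero P.rootForm_symmetric ha hab heα heβ v,
    hV.lie_lie_lie_eq_zero P.rootForm_symmetric (a := -P.root i) (b := -β) ?_ ?_ hfα hfβ v⟩
  · simpa using ha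
  · simpa using hab

/-- **A Serre-type vanishing on minuscule representations.**
Let `V` be a minuscule irreducible representation of a simple complex Lie
algebra `g`, let `α, β` be simple roots with Cartan integer
`a_{αβ} = ⟨β, α∨⟩ = -1`, and let `(eα, fα)` resp. `(eβ, fβ)` be Chevalley
generators attached to `α` resp. `β`.  Then for every `v ∈ V`,
`eα eβ eα ⬝ v = 0` and `fα fβ fα ⬝ v = 0`. -/
theorem serre_type_vanishing_on_minuscule
    (g : Type*) [LieRing g] [LieAlgebra ℂ g] [LieAlgebra.IsSimple ℂ g]
    [LieAlgebra.IsKilling ℂ g] [FiniteDimensional ℂ g]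
    (H : LieSubalgebra ℂ g) [H.IsCartanSubalgebra]
    (V : Type*) [AddCommGroup V] [Module ℂ V] [LieRingModule g V] [LieModule ℂ g V]
    [FiniteDimensional ℂ V] [LieModule.IsIrreducible ℂ g V]
    (hminuscule : ∀ χ₁ χ₂ : Module.Dual ℂ H,
      genWeightSpace V ⇑χ₁ ≠ ⊥ → genWeightSpace V ⇑χ₂ ≠ ⊥ →
      ∃ w ∈ weylGroup g H, w χ₁ = χ₂)
    (Δ : Set (Weight ℂ H g)) (hΔ : ∀ γ ∈ Δ, γ.IsNonZero)
    (α β : Weight ℂ H g) (hαΔ : α ∈ Δ) (hβΔ : β ∈ Δ)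
    (hα : α.IsNonZero) (hβ : β.IsNonZero)
    (hcartan : β (IsKilling.coroot α) = -1)
    (eα fα eβ fβ : g)
    (heα : eα ∈ rootSpace H ⇑α) (hfα : fα ∈ rootSpace H (-⇑α))
    (heβ : eβ ∈ rootSpace H ⇑β) (hfβ : fβ ∈ rootSpace H (-⇑β))
    (hefα : ⁅eα, fα⁆ = (IsKilling.coroot α : g))
    (hefβ : ⁅eβ, fβ⁆ = (IsKilling.coroot β : g)) :
    ∀ v : V, ⁅eα, ⁅eβ, ⁅eα, v⁆⁆⁆ = 0 ∧ ⁅fα, ⁅fβ, ⁅fα, v⁆⁆⁆ = 0 :=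
  serre_type_vanishing_on_minuscule_general g H V hminuscule α β hα hcartan eα fα eβ fβ heα hfα heβ
    hfβ
end

section
/- Let V be a minuscule representation of a simple complex Lie algebra g, and let i ≠ j be indices of simple roots with Cartan integer a_{ij} < 0. Then for every v ∈ V, e_i f_j · v = 0 and f_j e_i · v = 0. -/
/-!
The weights of `V` form one Weyl orbit and the Weyl group preserves the Killing form on `H*`,
so all weights have the same length. Hence if `χ` and `χ + α` are both weights, expanding
`(χ + α, χ + α) = (χ, χ)` gives `⟨χ, α∨⟩ = -1`. Combined with the fact that `α∨` acts with trace
zero on an `α`-string consisting of `χ` alone, every weight `χ` has `⟨χ, α∨⟩ ∈ {-1, 0, 1}`.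

Let `v` be a weight vector of weight `χ` and `m = ⟨β, α∨⟩ < 0`. If `e_α f_β v ≠ 0`, then `χ - β`
and `χ - β + α` are weights, so `⟨χ, α∨⟩ = m - 1 ≤ -2`. If `f_β e_α v ≠ 0`, then `χ` and `χ + α`
are weights and so is `χ + α - β`, but `⟨χ + α - β, α∨⟩ = 1 - m ≥ 2`.
-/

open LieAlgebra LieModule

open IsKilling Module

theorem LinearMap.BilinForm.IsSymm.apply_reflection_apply_self {R M : Type*} [CommRing R]
    [AddCommGroup M] [Module R M] {Q : LinearMap.BilinForm R M} (hQ : Q.IsSymm)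
    {x : M} {f : Dual R M} (h : f x = 2) (hf : ∀ y, f y * Q x x = 2 * Q y x) (y : M) :
    Q (reflection h y) (reflection h y) = Q y y := by
  have hxy : Q x y = Q y x := hQ.eq x y
  simp only [reflection_apply, map_sub, map_smul, LinearMap.sub_apply, LinearMap.smul_apply,
    smul_eq_mul]
  linear_combination f y * hf y - f y * hxy

section DualKillingForm

variable {K g : Type*} [Field K] [LieRing g] [LieAlgebra K g] [IsKilling K g]
  [FiniteDimensional K g] {H : LieSubalgebra K g} [H.IsCartanSubalgebra]

variable (H) in
noncomputable def dualKillingForm : LinearMap.BilinForm K (Dual K H) :=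
  (traceForm K H g).compl₁₂ (cartanEquivDual H).symm.toLinearMap
    (cartanEquivDual H).symm.toLinearMap

lemma dualKillingForm_apply (χ ψ : Dual K H) :
    dualKillingForm H χ ψ = χ ((cartanEquivDual H).symm ψ) := by
  conv_rhs => rw [← (cartanEquivDual H).apply_symm_apply χ]
  rfl

lemma isSymm_dualKillingForm : (dualKillingForm (g := g) H).IsSymm :=
  ⟨fun _ _ => LieModule.traceForm_comm K H g _ _⟩

lemma dualKillingForm_root_self_ne_zero [CharZero K] [IsTriangularizable K H g]
    {α : Weight K H g} (hα : α.IsNonZero) :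
    dualKillingForm H (α : Dual K H) α ≠ 0 := by
  simpa [dualKillingForm_apply] using root_apply_cartanEquivDual_symm_ne_zero hα

lemma apply_coroot_mul_dualKillingForm [CharZero K] [IsTriangularizable K H g]
    {α : Weight K H g} (hα : α.IsNonZero) (χ : Dual K H) :
    χ (coroot α) * dualKillingForm H (α : Dual K H) α = 2 * dualKillingForm H χ α := by
  have hne := dualKillingForm_root_self_ne_zero hα
  simp only [dualKillingForm_apply, Weight.toLinear_apply] at hne ⊢
  simp only [coroot, map_nsmul, map_smul, smul_eq_mul, nsmul_eq_mul, Nat.cast_ofNat]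
  field_simp

end DualKillingForm

section WeightSpaces

variable {K g V : Type*} [Field K] [LieRing g] [LieAlgebra K g] {H : LieSubalgebra K g}
  [LieRing.IsNilpotent H] [AddCommGroup V] [Module K V] [LieRingModule g V] [LieModule K g V]

lemma genWeightSpace_add_ne_bot_of_lie_ne_zero {μ χ : H → K} {x : g} {v : V}
    (hx : x ∈ rootSpace H μ) (hv : v ∈ genWeightSpace V χ) (h : ⁅x, v⁆ ≠ 0) :
    genWeightSpace V (μ + χ) ≠ ⊥ := by
  intro hbot
  have hmem := lie_mem_genWeightSpace_of_mem_genWeightSpace hx hv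
  rw [hbot, LieSubmodule.mem_bot] at hmem
  exact h hmem

lemma genWeightSpace_ne_bot_of_lie_lie_ne_zero {μ ν χ : H → K} {x y : g} {v : V}
    (hx : x ∈ rootSpace H μ) (hy : y ∈ rootSpace H ν) (hv : v ∈ genWeightSpace V χ)
    (h : ⁅x, ⁅y, v⁆⁆ ≠ 0) :
    genWeightSpace V χ ≠ ⊥ ∧ genWeightSpace V (ν + χ) ≠ ⊥ ∧
      genWeightSpace V (μ + (ν + χ)) ≠ ⊥ := by
  have hyv : ⁅y, v⁆ ≠ 0 := fun h' => h (by rw [h', lie_zero])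
  have hv0 : v ≠ 0 := fun h' => hyv (by rw [h', lie_zero])
  exact ⟨fun hbot => hv0 (by rwa [hbot, LieSubmodule.mem_bot] at hv),
    genWeightSpace_add_ne_bot_of_lie_ne_zero hy hv hyv,
    genWeightSpace_add_ne_bot_of_lie_ne_zero hx
      (lie_mem_genWeightSpace_of_mem_genWeightSpace hy hv) h⟩

lemma lie_lie_eq_zero_of_forall_mem_genWeightSpace [FiniteDimensional K V]
    [IsTriangularizable K H V] {x y : g}
    (h : ∀ χ : H → K, ∀ v ∈ genWeightSpace V χ, ⁅x, ⁅y, v⁆⁆ = 0) (v : V) :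
    ⁅x, ⁅y, v⁆⁆ = 0 := by
  have hv : v ∈ ⨆ χ : H → K, genWeightSpace V χ := by
    rw [iSup_genWeightSpace_eq_top K H V]
    exact LieSubmodule.mem_top v
  exact LieSubmodule.iSup_induction (motive := fun v => ⁅x, ⁅y, v⁆⁆ = 0) _ hv h (by simp)
    fun v w hv hw => by simp [hv, hw]

end WeightSpaces

section Trace

variable {K g V : Type*} [Field K] [CharZero K] [LieRing g] [LieAlgebra K g] [IsKilling K g]
  [FiniteDimensional K g] {H : LieSubalgebra K g} [H.IsCartanSubalgebra]
  [IsTriangularizable K H g] [AddCommGroup V] [Module K V] [LieRingModule g V] [LieModule K g V]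
  [FiniteDimensional K V]

lemma apply_coroot_eq_zero_of_genWeightSpace_add_eq_bot (α : Weight K H g) {χ : H → K}
    (hχ : genWeightSpace V χ ≠ ⊥) (hadd : genWeightSpace V (⇑α + χ) = ⊥)
    (hsub : genWeightSpace V (-⇑α + χ) = ⊥) :
    χ (coroot α) = 0 := by
  have hchain : genWeightSpaceChain V (⇑α) χ (-1) 1 = genWeightSpace V χ := by
    rw [genWeightSpaceChain_def', show Finset.Ioo (-1 : ℤ) 1 = {0} by decide]
    simp
  have htrace := trace_toEnd_genWeightSpaceChain_eq_zero V (⇑α) χ (-1) 1 (by simpa using hsub)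
    (by simpa using hadd) (coroot_mem_corootSpace α)
  rw [hchain, trace_toEnd_genWeightSpace] at htrace
  have : Nontrivial (genWeightSpace V χ) := (LieSubmodule.nontrivial_iff_ne_bot ..).mpr hχ
  simpa [Module.finrank_pos.ne'] using htrace

end Trace

section Minuscule

variable {g : Type*} [LieRing g] [LieAlgebra ℂ g] [IsKilling ℂ g] [FiniteDimensional ℂ g]
  {H : LieSubalgebra ℂ g} [H.IsCartanSubalgebra]
  {V : Type*} [AddCommGroup V] [Module ℂ V] [LieRingModule g V] [LieModule ℂ g V]
  [FiniteDimensional ℂ V]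

lemma dualKillingForm_weylGroup_apply_self {w : Dual ℂ H ≃ₗ[ℂ] Dual ℂ H}
    (hw : w ∈ weylGroup g H) (χ : Dual ℂ H) :
    dualKillingForm H (w χ) (w χ) = dualKillingForm H χ χ := by
  induction hw using Subgroup.closure_induction generalizing χ with
  | mem w hw =>
    obtain ⟨α, hα, rfl⟩ := hw
    exact isSymm_dualKillingForm.apply_reflection_apply_self _
      (apply_coroot_mul_dualKillingForm hα) χ
  | one => rfl
  | mul u w _ _ hu hw => exact (hu (w χ)).trans (hw χ)
  | inv w _ hw => simpa using (hw (w⁻¹ χ)).symm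

variable (g H V) in
def IsMinuscule : Prop :=
  ∀ χ₁ χ₂ : Dual ℂ H, genWeightSpace V ⇑χ₁ ≠ ⊥ → genWeightSpace V ⇑χ₂ ≠ ⊥ →
    ∃ w ∈ weylGroup g H, w χ₁ = χ₂

namespace IsMinuscule

variable {α : Weight ℂ H g}

lemma apply_coroot_eq_neg_one (hV : IsMinuscule g H V) (hα : α.IsNonZero)
    {χ : H → ℂ} (hχ : genWeightSpace V χ ≠ ⊥) (hχα : genWeightSpace V (⇑α + χ) ≠ ⊥) :
    χ (coroot α) = -1 := by
  let χ' : Dual ℂ H := Weight.toLinear ℂ H V ⟨χ, hχ⟩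
  obtain ⟨w, hw, hwχ⟩ := hV χ' (α + χ') hχ hχα
  have hnorm := dualKillingForm_weylGroup_apply_self hw χ'
  rw [hwχ] at hnorm
  have hsymm := isSymm_dualKillingForm.eq (α : Dual ℂ H) χ'
  have hcoroot := apply_coroot_mul_dualKillingForm hα χ'
  have hne := dualKillingForm_root_self_ne_zero hα
  simp only [map_add, LinearMap.add_apply] at hnorm
  apply mul_right_cancel₀ hne
  change χ' (coroot α) * _ = _
  linear_combination hcoroot + hnorm - hsymm

lemma apply_coroot_eq_neg_one_or_zero_or_one (hV : IsMinuscule g H V) (hα : α.IsNonZero)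
    {χ : H → ℂ} (hχ : genWeightSpace V χ ≠ ⊥) :
    χ (coroot α) = -1 ∨ χ (coroot α) = 0 ∨ χ (coroot α) = 1 := by
  by_cases hadd : genWeightSpace V (⇑α + χ) = ⊥
  · by_cases hsub : genWeightSpace V (-⇑α + χ) = ⊥
    · exact .inr (.inl (apply_coroot_eq_zero_of_genWeightSpace_add_eq_bot α hχ hadd hsub))
    · have h := hV.apply_coroot_eq_neg_one hα hsub (by rwa [add_neg_cancel_left])
      simp only [Pi.add_apply, Pi.neg_apply, root_apply_coroot hα] at h
      exact .inr (.inr (by linear_combination h))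
  · exact .inl (hV.apply_coroot_eq_neg_one hα hχ hadd)

lemma lie_lie_eq_zero_of_mem_rootSpace_of_mem_rootSpace_neg (hV : IsMinuscule g H V)
    (hα : α.IsNonZero) {β : H → ℂ} {m : ℤ} (hm : m < 0) (hβ : β (coroot α) = m) {x y : g}
    (hx : x ∈ rootSpace H α) (hy : y ∈ rootSpace H (-β)) (v : V) : ⁅x, ⁅y, v⁆⁆ = 0 := by
  refine lie_lie_eq_zero_of_forall_mem_genWeightSpace (H := H) (fun χ v hv => ?_) v
  by_contra hxyv
  obtain ⟨hχ, hψ, hψα⟩ := genWeightSpace_ne_bot_of_lie_lie_ne_zero hx hy hv hxyv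
  have hψ_coroot := hV.apply_coroot_eq_neg_one hα hψ hψα
  simp only [Pi.add_apply, Pi.neg_apply, hβ] at hψ_coroot
  rcases hV.apply_coroot_eq_neg_one_or_zero_or_one hα hχ with h | h | h <;>
    rw [h] at hψ_coroot <;> norm_cast at hψ_coroot <;> omega

lemma lie_lie_eq_zero_of_mem_rootSpace_neg_of_mem_rootSpace (hV : IsMinuscule g H V)
    (hα : α.IsNonZero) {β : H → ℂ} {m : ℤ} (hm : m < 0) (hβ : β (coroot α) = m) {x y : g}
    (hy : y ∈ rootSpace H (-β)) (hx : x ∈ rootSpace H α) (v : V) : ⁅y, ⁅x, v⁆⁆ = 0 := by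
  refine lie_lie_eq_zero_of_forall_mem_genWeightSpace (H := H) (fun χ v hv => ?_) v
  by_contra hyxv
  obtain ⟨hχ, hχα, hφ⟩ := genWeightSpace_ne_bot_of_lie_lie_ne_zero hy hx hv hyxv
  have hχ_coroot := hV.apply_coroot_eq_neg_one hα hχ hχα
  rcases hV.apply_coroot_eq_neg_one_or_zero_or_one hα hφ with h | h | h <;>
    simp only [Pi.add_apply, Pi.neg_apply, hβ, hχ_coroot, root_apply_coroot hα] at h <;>
    norm_cast at h <;> omega

end IsMinuscule

end Minuscule

theorem mixed_vanishing_on_minuscule_general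
    (g : Type*) [LieRing g] [LieAlgebra ℂ g]
    [LieAlgebra.IsKilling ℂ g] [FiniteDimensional ℂ g]
    (H : LieSubalgebra ℂ g) [H.IsCartanSubalgebra]
    (V : Type*) [AddCommGroup V] [Module ℂ V] [LieRingModule g V] [LieModule ℂ g V]
    [FiniteDimensional ℂ V]
    (hminuscule : ∀ χ₁ χ₂ : Module.Dual ℂ H,
      genWeightSpace V ⇑χ₁ ≠ ⊥ → genWeightSpace V ⇑χ₂ ≠ ⊥ →
      ∃ w ∈ weylGroup g H, w χ₁ = χ₂)
    (α β : Weight ℂ H g)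
    (hα : α.IsNonZero)
    (hcartan : ∃ m : ℤ, m < 0 ∧ β (IsKilling.coroot α) = (m : ℂ))
    (eα fβ : g)
    (heα : eα ∈ rootSpace H ⇑α)
    (hfβ : fβ ∈ rootSpace H (-⇑β)) :
    ∀ v : V, ⁅eα, ⁅fβ, v⁆⁆ = 0 ∧ ⁅fβ, ⁅eα, v⁆⁆ = 0 := by
  have hV : IsMinuscule g H V := hminuscule
  obtain ⟨m, hm, hβα⟩ := hcartan
  exact fun v => ⟨hV.lie_lie_eq_zero_of_mem_rootSpace_of_mem_rootSpace_neg hα hm hβα heα hfβ v,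
    hV.lie_lie_eq_zero_of_mem_rootSpace_neg_of_mem_rootSpace hα hm hβα hfβ heα v⟩

/-- **Mixed vanishing on minuscule representations.**
Let `V` be a minuscule irreducible representation of a simple complex Lie
algebra `g`, and let `α ≠ β` be simple roots with Cartan integer
`a_{αβ} = ⟨β, α∨⟩ < 0`.  With `eα` a root vector for `α` and `fβ` one for `-β`
(parts of Chevalley generator triples), one has `eα fβ ⬝ v = 0` and
`fβ eα ⬝ v = 0` for every `v ∈ V`. -/
theorem mixed_vanishing_on_minuscule
    (g : Type*) [LieRing g] [LieAlgebra ℂ g] [LieAlgebra.IsSimple ℂ g]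
    [LieAlgebra.IsKilling ℂ g] [FiniteDimensional ℂ g]
    (H : LieSubalgebra ℂ g) [H.IsCartanSubalgebra]
    (V : Type*) [AddCommGroup V] [Module ℂ V] [LieRingModule g V] [LieModule ℂ g V]
    [FiniteDimensional ℂ V] [LieModule.IsIrreducible ℂ g V]
    (hminuscule : ∀ χ₁ χ₂ : Module.Dual ℂ H,
      genWeightSpace V ⇑χ₁ ≠ ⊥ → genWeightSpace V ⇑χ₂ ≠ ⊥ →
      ∃ w ∈ weylGroup g H, w χ₁ = χ₂)
    (Δ : Set (Weight ℂ H g)) (hΔ : ∀ γ ∈ Δ, γ.IsNonZero)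
    (α β : Weight ℂ H g) (hαΔ : α ∈ Δ) (hβΔ : β ∈ Δ)
    (hα : α.IsNonZero) (hβ : β.IsNonZero) (hne : α ≠ β)
    (hcartan : ∃ m : ℤ, m < 0 ∧ β (IsKilling.coroot α) = (m : ℂ))
    (eα fα eβ fβ : g)
    (heα : eα ∈ rootSpace H ⇑α) (hfα : fα ∈ rootSpace H (-⇑α))
    (heβ : eβ ∈ rootSpace H ⇑β) (hfβ : fβ ∈ rootSpace H (-⇑β))
    (hefα : ⁅eα, fα⁆ = (IsKilling.coroot α : g))
    (hefβ : ⁅eβ, fβ⁆ = (IsKilling.coroot β : g)) :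
    ∀ v : V, ⁅eα, ⁅fβ, v⁆⁆ = 0 ∧ ⁅fβ, ⁅eα, v⁆⁆ = 0 :=
  mixed_vanishing_on_minuscule_general g H V hminuscule α β hα hcartan eα fβ heα hfβ
end

section
/- Let W be a Coxeter group and w ∈ W a fully commutative element (every reduced expression of w is obtained from any other by exchanging adjacent commuting generators). If w = w's_i with ℓ(w) = ℓ(w') + 1, then w' is also fully commutative. -/
/-!
Reversing a word turns `l ++ [i]` into `i :: l.reverse`, and commutation moves commute with
reversal. Deleting the first occurrence of `i` maps a commutation move to a commutation move or
to the identity, so a chain of moves from `i :: l.reverse` to `i :: l'.reverse` becomes a chain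
from `l.reverse` to `l'.reverse`. Since `ℓ(w' sᵢ) = ℓ(w') + 1`, appending `i` to a reduced word
of `w'` gives a reduced word of `w`, and full commutativity of `w` supplies that chain.
-/

/-- A single commutation move on words in a Coxeter system: swap two adjacent
letters whose simple reflections commute. -/
def CoxeterSystem.CommMove {B W : Type*} [Group W] {M : CoxeterMatrix B}
    (cs : CoxeterSystem M W) (l l' : List B) : Prop :=
  ∃ (u v : List B) (a b : B),
    cs.simple a * cs.simple b = cs.simple b * cs.simple a ∧
    l = u ++ a :: b :: v ∧ l' = u ++ b :: a :: v

/-- An element `w` is fully commutative if any two reduced words for `w` are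
related by a sequence of commutation moves. -/
def CoxeterSystem.FullyCommutative {B W : Type*} [Group W] {M : CoxeterMatrix B}
    (cs : CoxeterSystem M W) (w : W) : Prop :=
  ∀ l l' : List B,
    (cs.wordProd l = w ∧ cs.IsReduced l) →
    (cs.wordProd l' = w ∧ cs.IsReduced l') →
    Relation.ReflTransGen cs.CommMove l l'

namespace CoxeterSystem

variable {B W : Type*} [Group W] {M : CoxeterMatrix B} {cs : CoxeterSystem M W}

theorem CommMove.reverse {x y : List B} (h : cs.CommMove x y) :
    cs.CommMove x.reverse y.reverse := by
  obtain ⟨u, v, a, c, hac, rfl, rfl⟩ := h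
  exact ⟨v.reverse, u.reverse, c, a, hac.symm, by simp, by simp⟩

theorem CommMove.erase [DecidableEq B] {x y : List B} (h : cs.CommMove x y) (i : B) :
    Relation.ReflTransGen cs.CommMove (x.erase i) (y.erase i) := by
  obtain ⟨u, v, a, c, hac, rfl, rfl⟩ := h
  by_cases hu : i ∈ u
  · rw [List.erase_append_left _ hu, List.erase_append_left _ hu]
    exact .single ⟨u.erase i, v, a, c, hac, rfl, rfl⟩
  rw [List.erase_append_right _ hu, List.erase_append_right _ hu]
  by_cases ha : a = i <;> by_cases hc : c = i
  · simp [ha, hc, Relation.ReflTransGen.refl]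
  · simp [ha, hc, Relation.ReflTransGen.refl]
  · simp [ha, hc, Relation.ReflTransGen.refl]
  · simp only [List.erase_cons, beq_iff_eq, ha, hc, if_false]
    exact .single ⟨u, v.erase i, a, c, hac, rfl, rfl⟩

theorem reflTransGen_commMove_reverse {x y : List B}
    (h : Relation.ReflTransGen cs.CommMove x y) :
    Relation.ReflTransGen cs.CommMove x.reverse y.reverse :=
  h.lift _ fun _ _ ↦ CommMove.reverse

theorem reflTransGen_commMove_erase [DecidableEq B] {x y : List B}
    (h : Relation.ReflTransGen cs.CommMove x y) (i : B) :
    Relation.ReflTransGen cs.CommMove (x.erase i) (y.erase i) :=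
  h.lift' _ fun _ _ hxy ↦ hxy.erase i

theorem IsReduced.append_singleton {ω : List B} {i : B} (hω : cs.IsReduced ω)
    (hi : cs.length (cs.wordProd ω * cs.simple i) = cs.length (cs.wordProd ω) + 1) :
    cs.IsReduced (ω ++ [i]) := by
  rw [IsReduced, wordProd_append, wordProd_singleton, hi, hω.eq, List.length_append,
    List.length_singleton]

end CoxeterSystem

/-- **Full commutativity passes to right prefixes.**
If `w = w' sᵢ` with `ℓ(w) = ℓ(w') + 1` and `w` is fully commutative, then so
is `w'`. -/
theorem fullyCommutative_of_mul_simple_right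
    {B W : Type*} [Group W] {M : CoxeterMatrix B} (cs : CoxeterSystem M W)
    (w w' : W) (i : B)
    (hmul : w = w' * cs.simple i)
    (hlen : cs.length w = cs.length w' + 1)
    (hfc : cs.FullyCommutative w) :
    cs.FullyCommutative w' := by
  classical
  have reducedWord_append_i : ∀ l : List B, cs.wordProd l = w' ∧ cs.IsReduced l →
      cs.wordProd (l ++ [i]) = w ∧ cs.IsReduced (l ++ [i]) := by
    rintro l ⟨rfl, hl⟩
    refine ⟨by rw [cs.wordProd_append, cs.wordProd_singleton, hmul], hl.append_singleton ?_⟩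
    rw [← hmul, hlen]
  intro l l' hl hl'
  have chain := CoxeterSystem.reflTransGen_commMove_erase
    (CoxeterSystem.reflTransGen_commMove_reverse (hfc _ _ (reducedWord_append_i l hl) (reducedWord_append_i l' hl'))) i
  simpa using CoxeterSystem.reflTransGen_commMove_reverse chain
end

section
/- Fix a reduced word w^P = s_{r_1}⋯s_{r_ℓ} in a Coxeter group W and a subexpression (i_1 < ⋯ < i_{ℓ'}) for an element w' (so s_{r_{i_1}}⋯s_{r_{i_{ℓ'}}} = w' with ℓ(w') = ℓ'). Suppose ĩ < i_j satisfies r_ĩ = r_{i_j}, there exists j' < j with i_{j'} < ĩ < i_{j'+1} ≤ i_j, and s_{r_{i_j}} commutes with s_{r_{i_m}} for all m ∈ {j'+1,…,j−1}. Then the increasing sequence (i_1,…,i_{j'}, ĩ, i_{j'+1},…,i_{j−1}, i_{j+1},…,i_{ℓ'}) is again a subexpression for w'. -/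
/-!
The letters of the subexpression `i` spell `u ++ v ++ s :: w`, where `s` is the letter at `i j`
and `v` consists of the letters at `i (j'+1), …, i (j-1)`. Since `itil` carries the same letter
`s`, the moved sequence spells `u ++ s :: v ++ w`, and the two words have the same product because
`s` commutes with every letter of `v`. The moved sequence is increasing because `itil` lies
strictly between `i j'` and `i (j'+1)`.
-/

namespace List

theorem prod_append_cons_append_of_commute {M : Type*} [Monoid M] (u v w : List M) {x : M}
    (h : ∀ y ∈ v, Commute x y) : (u ++ x :: v ++ w).prod = (u ++ v ++ x :: w).prod := by
  simp only [prod_append, prod_cons, mul_assoc, (Commute.list_prod_right v x h).eq]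

theorem take_append_take_drop_append_getElem_cons {α : Type*} (l : List α) {a b : ℕ}
    (hab : a ≤ b) (hb : b < l.length) :
    l.take a ++ (l.drop a).take (b - a) ++ l[b] :: l.drop (b + 1) = l := by
  obtain ⟨c, rfl⟩ := Nat.exists_eq_add_of_le hab
  rw [← drop_eq_getElem_cons, Nat.add_sub_cancel_left, ← drop_drop, append_assoc,
    take_append_drop, take_append_drop]

end List

theorem CoxeterSystem.wordProd_append_cons_append_of_commute {B W : Type*} [Group W]
    {M : CoxeterMatrix B} (cs : CoxeterSystem M W) (u v w : List B) {s : B}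
    (h : ∀ t ∈ v, cs.simple s * cs.simple t = cs.simple t * cs.simple s) :
    cs.wordProd (u ++ s :: v ++ w) = cs.wordProd (u ++ v ++ s :: w) := by
  simp only [CoxeterSystem.wordProd, List.map_append, List.map_cons]
  exact List.prod_append_cons_append_of_commute _ _ _ (by simpa [Commute, SemiconjBy] using h)

/-- The sequence `(i 0, …, i j', itil, i (j'+1), …, i (j-1), i (j+1), …)`. -/
def moveLetter {L L' : ℕ} (i : Fin L' → Fin L) (j j' : Fin L') (itil : Fin L) :
    Fin L' → Fin L := fun m =>
  if m.1 ≤ j'.1 then i m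
  else if m.1 = j'.1 + 1 then itil
  else if m.1 ≤ j.1 then i ⟨m.1 - 1, lt_of_le_of_lt (Nat.sub_le m.1 1) m.2⟩
  else i m

theorem strictMono_moveLetter {L L' : ℕ} {i : Fin L' → Fin L} (hmono : StrictMono i)
    (j : Fin L') {j' : Fin L'} {itil : Fin L} (hlow : i j' < itil)
    (hhigh : ∀ m : Fin L', j' < m → itil < i m) : StrictMono (moveLetter i j j' itil) := by
  intro m₁ m₂ h
  rw [Fin.lt_def] at h
  unfold moveLetter
  split_ifs <;> first
    | exact hmono (by simp only [Fin.lt_def]; omega)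
    | exact hhigh _ (by simp only [Fin.lt_def]; omega)
    | exact (hmono.monotone (by simp only [Fin.le_def]; omega)).trans_lt hlow
    | omega

theorem ofFn_comp_moveLetter {α : Type*} {L L' : ℕ} (f : Fin L → α) (i : Fin L' → Fin L)
    {j j' : Fin L'} (hj'j : j' < j) {itil : Fin L} (hletter : f itil = f (i j)) :
    List.ofFn (fun m => f (moveLetter i j j' itil m)) =
      (List.ofFn fun m => f (i m)).take (j' + 1) ++ f (i j) ::
        ((List.ofFn fun m => f (i m)).drop (j' + 1)).take (j - (j' + 1)) ++
        (List.ofFn fun m => f (i m)).drop (j + 1) := by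
  rw [Fin.lt_def] at hj'j
  apply List.ext_getElem
  · simp only [List.length_ofFn, List.length_append, List.length_take, List.length_cons,
      List.length_drop]
    omega
  intro m h₁ h₂
  simp only [List.length_ofFn] at h₁
  simp only [moveLetter, Fin.val_fin_le, List.getElem_ofFn, List.append_assoc, List.cons_append,
    List.getElem_append, List.length_take, List.length_ofFn, Order.add_one_le_iff, Fin.is_lt,
    inf_of_le_left, Order.lt_add_one_iff, List.getElem_take, List.getElem_cons, List.length_drop,
    tsub_le_iff_right, Nat.sub_add_cancel, Fin.is_le', List.getElem_drop]
  split_ifs <;> simp only [Fin.le_def] at * <;> first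
    | omega
    | rfl
    | exact hletter
    | (congr 2; ext; simp only; omega)

theorem subexpression_move_letter_across_commuting_general
    {B W : Type*} [Group W] {M : CoxeterMatrix B}
    (cs : CoxeterSystem M W)
    {L L' : ℕ} (r : Fin L → B)
    (w' : W)
    (i : Fin L' → Fin L) (hmono : StrictMono i)
    (hprod : cs.wordProd (List.ofFn fun m => r (i m)) = w')
    (j j' : Fin L') (hj'j : j' < j)
    (itil : Fin L) (hletter : r itil = r (i j))
    (hlow : i j' < itil)
    (hhigh : ∀ m : Fin L', j' < m → itil < i m)
    (hcomm : ∀ m : Fin L', j' < m → m < j →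
      cs.simple (r (i j)) * cs.simple (r (i m))
        = cs.simple (r (i m)) * cs.simple (r (i j))) :
    let σ : Fin L' → Fin L := fun m =>
      if m.1 ≤ j'.1 then i m
      else if m.1 = j'.1 + 1 then itil
      else if m.1 ≤ j.1 then i ⟨m.1 - 1, lt_of_le_of_lt (Nat.sub_le m.1 1) m.2⟩
      else i m
    StrictMono σ ∧ cs.wordProd (List.ofFn fun m => r (σ m)) = w' := by
  show StrictMono (moveLetter i j j' itil) ∧
    cs.wordProd (List.ofFn fun m => r (moveLetter i j j' itil m)) = w'
  refine ⟨strictMono_moveLetter hmono j hlow hhigh, ?_⟩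
  set l := List.ofFn fun m => r (i m)
  have hj : (j : ℕ) < l.length := by simp [l]
  have hlj : l[(j : ℕ)] = r (i j) := List.getElem_ofFn ..
  have hmiddle : ∀ t ∈ (l.drop (j' + 1)).take (j - (j' + 1)),
      cs.simple (r (i j)) * cs.simple t = cs.simple t * cs.simple (r (i j)) := by
    intro t ht
    obtain ⟨k, hk, rfl⟩ := List.mem_iff_getElem.mp ht
    simp only [List.length_take, List.length_drop, l, List.length_ofFn] at hk
    simp only [List.getElem_take, List.getElem_drop, l, List.getElem_ofFn]
    exact hcomm ⟨j' + 1 + k, by omega⟩ (by simp only [Fin.lt_def]; omega)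
      (by simp only [Fin.lt_def]; omega)
  rw [← hprod, ofFn_comp_moveLetter r i hj'j hletter,
    cs.wordProd_append_cons_append_of_commute _ _ _ hmiddle, ← hlj,
    l.take_append_take_drop_append_getElem_cons (Nat.succ_le_of_lt hj'j) hj]

/-- **Moving a letter of a subexpression across commuting letters (operation (ii)).**
Fix a reduced word `s_{r 0} ⋯ s_{r (L-1)}` for `w^P` and a subexpression
`i : Fin L' → Fin L` (increasing, letters multiplying to `w'`, `ℓ(w') = L'`).
Suppose a position `itil < i j` carries the same letter as position `i j`, there
is `j' < j` with `i j' < itil < i (j'+1)`, and the letter at `i j` commutes with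
the letters at the intermediate positions `i m`, `j' < m < j`.  Then the
increasing sequence `(i 0, …, i j', itil, i (j'+1), …, i (j-1), i (j+1), …)`
is again a subexpression for `w'`. -/
theorem subexpression_move_letter_across_commuting
    {B W : Type*} [Group W] {M : CoxeterMatrix B}
    (cs : CoxeterSystem M W)
    {L L' : ℕ} (r : Fin L → B)
    (hred : cs.IsReduced (List.ofFn fun m => r m))
    (w' : W) (hlen : cs.length w' = L')
    (i : Fin L' → Fin L) (hmono : StrictMono i)
    (hprod : cs.wordProd (List.ofFn fun m => r (i m)) = w')
    (j j' : Fin L') (hj'j : j' < j)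
    (itil : Fin L) (hletter : r itil = r (i j)) (hitil_lt : itil < i j)
    (hlow : i j' < itil)
    (hhigh : ∀ m : Fin L', j' < m → itil < i m)
    (hcomm : ∀ m : Fin L', j' < m → m < j →
      cs.simple (r (i j)) * cs.simple (r (i m))
        = cs.simple (r (i m)) * cs.simple (r (i j))) :
    let σ : Fin L' → Fin L := fun m =>
      if m.1 ≤ j'.1 then i m
      else if m.1 = j'.1 + 1 then itil
      else if m.1 ≤ j.1 then i ⟨m.1 - 1, lt_of_le_of_lt (Nat.sub_le m.1 1) m.2⟩
      else i m
    StrictMono σ ∧ cs.wordProd (List.ofFn fun m => r (σ m)) = w' :=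
  subexpression_move_letter_across_commuting_general cs r w' i hmono hprod j j' hj'j itil hletter
    hlow hhigh hcomm
end
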